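/- arXiv:1107.5883 — 2 statements merged into one kernel-verified Lean document; each statement's English description precedes it below -/
import Mathlib

section
/- Let w = γ w_old + (1-γ) w_next be a feasible pooled design with c_m in the range of M_m(w) for all m, and let G_1,...,G_M be symmetric generalized inverses of M_1(w),...,M_M(w) with c_mᵀ G_m c_m > 0 for all m. Then for every feasible pooled design w' = γ w_old + (1-γ) v (v ∈ S^k) with c_m in the range of M_m(w') for all m, one has Ψ(w') ≥ Ψ(w) · [1 + (1-γ) · max_{v' ∈ S^k} Σ_{m=1}^M α_m c_mᵀ G_m (M_m(v') − M_m(w_next)) G_m c_m / (c_mᵀ G_m c_m)]^{-1}. -/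
open Matrix

/-- The information matrix `M(w) = ∑ i, w i • g(d i) g(d i)ᵀ` of a design `w`. -/
noncomputable def infoMat {k pm : ℕ} (d : Fin k → ℝ) (g : ℝ → Fin pm → ℝ)
    (w : Fin k → ℝ) : Matrix (Fin pm) (Fin pm) ℝ :=
  ∑ i, w i • vecMulVec (g (d i)) (g (d i))

/-- The probability simplex of designs on `k` dose levels. -/
def simplex (k : ℕ) : Set (Fin k → ℝ) := {w | (∀ i, 0 ≤ w i) ∧ ∑ i, w i = 1}

/-- The compound design criterion `Ψ = ∏ m, (c_mᵀ G_m c_m)^(α_m)`, expressed via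
generalized inverses `G_m` of the information matrices (on which the value does
not depend when `c_m` lies in the corresponding range). -/
noncomputable def Psi {M : ℕ} {p : Fin M → ℕ} (α : Fin M → ℝ)
    (c : ∀ m, Fin (p m) → ℝ)
    (G : ∀ m, Matrix (Fin (p m)) (Fin (p m)) ℝ) : ℝ :=
  ∏ m, (c m ⬝ᵥ (G m *ᵥ c m)) ^ (α m)

/- ### Auxiliary lemmas -/

lemma infoMat_dot {k pm : ℕ} (d : Fin k → ℝ) (g : ℝ → Fin pm → ℝ) (w : Fin k → ℝ)
    (x y : Fin pm → ℝ) :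
    x ⬝ᵥ (infoMat d g w *ᵥ y) = ∑ i, w i * ((g (d i) ⬝ᵥ x) * (g (d i) ⬝ᵥ y)) := by
  simp only [infoMat, dotProduct, mulVec, Matrix.sum_apply, Matrix.smul_apply,
    vecMulVec_apply, smul_eq_mul, Finset.sum_mul, Finset.mul_sum]
  calc ∑ a : Fin pm, ∑ b : Fin pm, ∑ i : Fin k, x a * (w i * (g (d i) a * g (d i) b) * y b)
      = ∑ a : Fin pm, ∑ i : Fin k, ∑ b : Fin pm, x a * (w i * (g (d i) a * g (d i) b) * y b) :=
        Finset.sum_congr rfl fun _ _ => Finset.sum_comm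
    _ = ∑ i : Fin k, ∑ a : Fin pm, ∑ b : Fin pm, x a * (w i * (g (d i) a * g (d i) b) * y b) :=
        Finset.sum_comm
    _ = ∑ i : Fin k, ∑ a : Fin pm, ∑ b : Fin pm, w i * (g (d i) a * x a * (g (d i) b * y b)) := by
        refine Finset.sum_congr rfl fun i _ => Finset.sum_congr rfl fun a _ =>
          Finset.sum_congr rfl fun b _ => ?_
        ring
    _ = ∑ i : Fin k, ∑ b : Fin pm, ∑ a : Fin pm, w i * (g (d i) a * x a * (g (d i) b * y b)) :=
        Finset.sum_congr rfl fun _ _ => Finset.sum_comm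

lemma infoMat_transpose {k pm : ℕ} (d : Fin k → ℝ) (g : ℝ → Fin pm → ℝ) (w : Fin k → ℝ) :
    (infoMat d g w)ᵀ = infoMat d g w := by
  unfold infoMat
  rw [Matrix.transpose_sum]
  refine Finset.sum_congr rfl fun i _ => ?_
  rw [Matrix.transpose_smul]
  congr 1
  ext a b
  simp [vecMulVec_apply, mul_comm]

lemma infoMat_lin {k pm : ℕ} (d : Fin k → ℝ) (g : ℝ → Fin pm → ℝ) (a b : ℝ)
    (u v : Fin k → ℝ) :
    infoMat d g (fun i => a * u i + b * v i) = a • infoMat d g u + b • infoMat d g v := by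
  unfold infoMat
  rw [Finset.smul_sum, Finset.smul_sum, ← Finset.sum_add_distrib]
  refine Finset.sum_congr rfl fun i _ => ?_
  rw [add_smul, smul_smul, smul_smul]

lemma infoMat_dot_nonneg {k pm : ℕ} (d : Fin k → ℝ) (g : ℝ → Fin pm → ℝ)
    {u : Fin k → ℝ} (hu : ∀ i, 0 ≤ u i) (x : Fin pm → ℝ) :
    0 ≤ x ⬝ᵥ (infoMat d g u *ᵥ x) := by
  rw [infoMat_dot]
  exact Finset.sum_nonneg fun i _ => mul_nonneg (hu i) (mul_self_nonneg _)

lemma infoMat_cauchy {k pm : ℕ} (d : Fin k → ℝ) (g : ℝ → Fin pm → ℝ)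
    {u : Fin k → ℝ} (hu : ∀ i, 0 ≤ u i) (x y : Fin pm → ℝ) :
    (x ⬝ᵥ (infoMat d g u *ᵥ y)) ^ 2 ≤
      (x ⬝ᵥ (infoMat d g u *ᵥ x)) * (y ⬝ᵥ (infoMat d g u *ᵥ y)) := by
  rw [infoMat_dot, infoMat_dot, infoMat_dot]
  have h := Finset.sum_mul_sq_le_sq_mul_sq Finset.univ
    (fun i => Real.sqrt (u i) * (g (d i) ⬝ᵥ x)) (fun i => Real.sqrt (u i) * (g (d i) ⬝ᵥ y))
  have e1 : ∀ i : Fin k,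
      (Real.sqrt (u i) * (g (d i) ⬝ᵥ x)) * (Real.sqrt (u i) * (g (d i) ⬝ᵥ y))
        = u i * ((g (d i) ⬝ᵥ x) * (g (d i) ⬝ᵥ y)) := fun i => by
    rw [mul_mul_mul_comm, Real.mul_self_sqrt (hu i)]
  have e2 : ∀ (z : Fin pm → ℝ) (i : Fin k),
      (Real.sqrt (u i) * (g (d i) ⬝ᵥ z)) ^ 2 = u i * ((g (d i) ⬝ᵥ z) * (g (d i) ⬝ᵥ z)) :=
    fun z i => by rw [mul_pow, Real.sq_sqrt (hu i)]; ring
  simpa only [e1, e2] using h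

lemma dot_flip {n : Type*} [Fintype n] (A : Matrix n n ℝ) (x z : n → ℝ) :
    (A *ᵥ x) ⬝ᵥ z = x ⬝ᵥ (Aᵀ *ᵥ z) := by
  conv_rhs => rw [Matrix.dotProduct_mulVec, Matrix.vecMul_transpose]

/-- The purely numerical part of the efficiency bound. -/
lemma psi_bound {M : ℕ} (α V N V' : Fin M → ℝ) (hα : ∀ m, 0 ≤ α m)
    (hαs : ∑ m, α m = 1) (hV : ∀ m, 0 < V m) (hN : ∀ m, 0 ≤ N m) (hV' : ∀ m, 0 ≤ V' m)
    (hCS : ∀ m, (V m) ^ 2 ≤ N m * V' m) (U : ℝ)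
    (hU : ∑ m, α m * (N m / V m) ≤ U) :
    ∏ m, (V' m) ^ (α m) ≥ (∏ m, (V m) ^ (α m)) * U⁻¹ := by
  have hNpos : ∀ m, 0 < N m := by
    intro m
    rcases (hN m).lt_or_eq with h | h
    · exact h
    · exfalso
      have h1 := hCS m
      rw [← h, zero_mul] at h1
      nlinarith [pow_pos (hV m) 2]
  have hV'pos : ∀ m, 0 < V' m := by
    intro m
    rcases (hV' m).lt_or_eq with h | h
    · exact h
    · exfalso
      have h1 := hCS m
      rw [← h, mul_zero] at h1
      nlinarith [pow_pos (hV m) 2]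
  have hVNle : ∀ m, V m ^ 2 / N m ≤ V' m := fun m =>
    (div_le_iff₀ (hNpos m)).mpr (by linarith [hCS m, mul_comm (N m) (V' m)])
  have hP_le : ∏ m, (N m / V m) ^ (α m) ≤ ∑ m, α m * (N m / V m) :=
    Real.geom_mean_le_arith_mean_weighted Finset.univ α (fun m => N m / V m)
      (fun m _ => hα m) hαs (fun m _ => (div_pos (hNpos m) (hV m)).le)
  have hPpos : 0 < ∏ m, (N m / V m) ^ (α m) :=
    Finset.prod_pos fun m _ => Real.rpow_pos_of_pos (div_pos (hNpos m) (hV m)) _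
  have hTpos : 0 < ∑ m, α m * (N m / V m) := lt_of_lt_of_le hPpos hP_le
  have hUpos : 0 < U := lt_of_lt_of_le hTpos hU
  have step1 : ∏ m, (V m ^ 2 / N m) ^ (α m) ≤ ∏ m, (V' m) ^ (α m) :=
    Finset.prod_le_prod
      (fun m _ => Real.rpow_nonneg (div_nonneg (sq_nonneg _) (hNpos m).le) _)
      (fun m _ => Real.rpow_le_rpow (div_nonneg (sq_nonneg _) (hNpos m).le) (hVNle m) (hα m))
  have step2 : ∏ m, (V m ^ 2 / N m) ^ (α m)
      = (∏ m, (V m) ^ (α m)) * ∏ m, (V m / N m) ^ (α m) := by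
    rw [← Finset.prod_mul_distrib]
    refine Finset.prod_congr rfl fun m _ => ?_
    rw [← Real.mul_rpow (hV m).le (div_nonneg (hV m).le (hNpos m).le)]
    congr 1
    rw [sq, mul_div_assoc]
  have step3 : ∏ m, (V m / N m) ^ (α m) = (∏ m, (N m / V m) ^ (α m))⁻¹ := by
    rw [← Finset.prod_inv_distrib]
    refine Finset.prod_congr rfl fun m _ => ?_
    rw [← Real.inv_rpow (div_pos (hNpos m) (hV m)).le, inv_div]
  have hinv : U⁻¹ ≤ (∏ m, (N m / V m) ^ (α m))⁻¹ :=
    le_trans (inv_anti₀ hTpos hU) (inv_anti₀ hPpos hP_le)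
  have hprodV : 0 ≤ ∏ m, (V m) ^ (α m) :=
    Finset.prod_nonneg fun m _ => Real.rpow_nonneg (hV m).le _
  calc (∏ m, (V m) ^ (α m)) * U⁻¹
      ≤ (∏ m, (V m) ^ (α m)) * (∏ m, (N m / V m) ^ (α m))⁻¹ :=
        mul_le_mul_of_nonneg_left hinv hprodV
    _ = ∏ m, (V m ^ 2 / N m) ^ (α m) := by rw [step2, step3]
    _ ≤ ∏ m, (V' m) ^ (α m) := step1

/-- Efficiency lower bound `1/k*(w, γ)`: for the pooled design
`w = γ w_old + (1-γ) w_next` with symmetric generalized inverses `G_m` of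
`M_m(w)` and `c_mᵀ G_m c_m > 0`, every competing feasible pooled design
`w' = γ w_old + (1-γ) v` satisfies
`Ψ(w') ≥ Ψ(w) · [1 + (1-γ) max_{v'∈S^k} ∑ m, α_m c_mᵀ G_m (M_m(v') − M_m(w_next)) G_m c_m / (c_mᵀ G_m c_m)]⁻¹`. -/
theorem efficiency_bound_kstar {k M : ℕ} {p : Fin M → ℕ}
    (d : Fin k → ℝ) (g : ∀ m, ℝ → Fin (p m) → ℝ) (c : ∀ m, Fin (p m) → ℝ)
    (α : Fin M → ℝ) (hα : ∀ m, 0 ≤ α m) (hαs : ∑ m, α m = 1)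
    (wold wnext : Fin k → ℝ) (hwold : wold ∈ simplex k) (hwnext : wnext ∈ simplex k)
    (γ : ℝ) (hγ : γ ∈ Set.Ioo (0 : ℝ) 1)
    (w : Fin k → ℝ) (hw : w = fun i => γ * wold i + (1 - γ) * wnext i)
    (hrange : ∀ m, ∃ x, infoMat d (g m) w *ᵥ x = c m)
    (G : ∀ m, Matrix (Fin (p m)) (Fin (p m)) ℝ)
    (hGsym : ∀ m, (G m)ᵀ = G m)
    (hGinv : ∀ m, infoMat d (g m) w * G m * infoMat d (g m) w = infoMat d (g m) w)
    (hpos : ∀ m, 0 < c m ⬝ᵥ (G m *ᵥ c m)) :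
    ∀ v ∈ simplex k,
      (∀ m, ∃ x,
        infoMat d (g m) (fun i => γ * wold i + (1 - γ) * v i) *ᵥ x = c m) →
      ∀ G' : ∀ m, Matrix (Fin (p m)) (Fin (p m)) ℝ,
        (∀ m, infoMat d (g m) (fun i => γ * wold i + (1 - γ) * v i) * G' m *
            infoMat d (g m) (fun i => γ * wold i + (1 - γ) * v i) =
            infoMat d (g m) (fun i => γ * wold i + (1 - γ) * v i)) →
        Psi α c G' ≥ Psi α c G *
          (1 + (1 - γ) * sSup ((fun v' => ∑ m, α m *
            (c m ⬝ᵥ (G m *ᵥ ((infoMat d (g m) v' - infoMat d (g m) wnext) *ᵥ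
              (G m *ᵥ c m)))) / (c m ⬝ᵥ (G m *ᵥ c m))) '' simplex k))⁻¹ := by
  obtain ⟨hγ0, hγ1⟩ := hγ
  have h1γ : (0 : ℝ) < 1 - γ := by linarith
  intro v hv hrange' G' hG'inv
  choose x hx using hrange
  choose b hb using hrange'
  have hw'pos : ∀ i, 0 ≤ γ * wold i + (1 - γ) * v i := fun i =>
    add_nonneg (mul_nonneg hγ0.le (hwold.1 i)) (mul_nonneg h1γ.le (hv.1 i))
  -- symmetric transfer for G
  have hvm : ∀ m, c m ᵥ* G m = G m *ᵥ c m := fun m => by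
    conv_lhs => rw [← hGsym m, Matrix.vecMul_transpose]
  have hdotG : ∀ m (u' : Fin k → ℝ),
      c m ⬝ᵥ (G m *ᵥ ((infoMat d (g m) u' - infoMat d (g m) wnext) *ᵥ (G m *ᵥ c m)))
        = (G m *ᵥ c m) ⬝ᵥ ((infoMat d (g m) u' - infoMat d (g m) wnext) *ᵥ (G m *ᵥ c m)) := by
    intro m u'
    rw [Matrix.dotProduct_mulVec, hvm m]
  -- the quadratic form of the old design at `G c`
  have hVN : ∀ m, (G m *ᵥ c m) ⬝ᵥ (infoMat d (g m) w *ᵥ (G m *ᵥ c m))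
      = c m ⬝ᵥ (G m *ᵥ c m) := by
    intro m
    set A := infoMat d (g m) w with hA
    have hAsym : Aᵀ = A := infoMat_transpose d (g m) w
    have e1 : G m *ᵥ c m = (G m * A) *ᵥ x m := by rw [← hx m, mulVec_mulVec]
    have lhs_eq : (G m *ᵥ c m) ⬝ᵥ (A *ᵥ (G m *ᵥ c m)) = x m ⬝ᵥ (A *ᵥ x m) := by
      rw [e1, mulVec_mulVec, dot_flip, mulVec_mulVec, transpose_mul, hGsym m, hAsym]
      congr 2
      simp only [← mul_assoc]
      rw [hGinv m, hGinv m]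
    have rhs_eq : c m ⬝ᵥ (G m *ᵥ c m) = x m ⬝ᵥ (A *ᵥ x m) := by
      conv_lhs => rw [← hx m]
      rw [mulVec_mulVec, dot_flip, mulVec_mulVec, hAsym]
      congr 2
      simp only [← mul_assoc]
      rw [hGinv m]
    rw [lhs_eq, rhs_eq]
  -- value of the competing design through any generalized inverse
  have hV'b : ∀ m, c m ⬝ᵥ (G' m *ᵥ c m)
      = b m ⬝ᵥ (infoMat d (g m) (fun i => γ * wold i + (1 - γ) * v i) *ᵥ b m) := by
    intro m
    set A' := infoMat d (g m) (fun i => γ * wold i + (1 - γ) * v i) with hA'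
    have hA'sym : A'ᵀ = A' := infoMat_transpose d (g m) _
    conv_lhs => rw [← hb m]
    rw [mulVec_mulVec, dot_flip, mulVec_mulVec, hA'sym]
    congr 2
    simp only [← mul_assoc]
    rw [hG'inv m]
  have hV'nonneg : ∀ m, 0 ≤ c m ⬝ᵥ (G' m *ᵥ c m) := fun m => by
    rw [hV'b m]; exact infoMat_dot_nonneg _ _ hw'pos _
  -- Cauchy–Schwarz
  have hCS : ∀ m, (c m ⬝ᵥ (G m *ᵥ c m)) ^ 2 ≤
      ((G m *ᵥ c m) ⬝ᵥ (infoMat d (g m) (fun i => γ * wold i + (1 - γ) * v i) *ᵥ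
        (G m *ᵥ c m))) * (c m ⬝ᵥ (G' m *ᵥ c m)) := by
    intro m
    have h := infoMat_cauchy d (g m) hw'pos (G m *ᵥ c m) (b m)
    nth_rewrite 1 [hb m] at h
    have e : (G m *ᵥ c m) ⬝ᵥ c m = c m ⬝ᵥ (G m *ᵥ c m) := by
      rw [dot_flip, hGsym m]
    rw [e, ← hV'b m] at h
    exact h
  -- decomposition of the pooled information matrix
  have hNdecomp : ∀ m, (G m *ᵥ c m) ⬝ᵥ (infoMat d (g m)
      (fun i => γ * wold i + (1 - γ) * v i) *ᵥ (G m *ᵥ c m))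
      = c m ⬝ᵥ (G m *ᵥ c m) + (1 - γ) *
        ((G m *ᵥ c m) ⬝ᵥ ((infoMat d (g m) v - infoMat d (g m) wnext) *ᵥ (G m *ᵥ c m))) := by
    intro m
    have hM : infoMat d (g m) (fun i => γ * wold i + (1 - γ) * v i)
        = infoMat d (g m) w + (1 - γ) • (infoMat d (g m) v - infoMat d (g m) wnext) := by
      rw [hw, infoMat_lin d (g m) γ (1 - γ) wold v, infoMat_lin d (g m) γ (1 - γ) wold wnext,
        smul_sub]
      abel
    rw [hM, Matrix.add_mulVec, Matrix.smul_mulVec, dotProduct_add, dotProduct_smul,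
      smul_eq_mul, hVN m]
  -- boundedness of the directional-derivative function over the simplex
  have hbdd : BddAbove ((fun v' => ∑ m, α m *
      (c m ⬝ᵥ (G m *ᵥ ((infoMat d (g m) v' - infoMat d (g m) wnext) *ᵥ
        (G m *ᵥ c m)))) / (c m ⬝ᵥ (G m *ᵥ c m))) '' simplex k) := by
    refine ⟨∑ m, α m * (∑ i, (g m (d i) ⬝ᵥ (G m *ᵥ c m)) * (g m (d i) ⬝ᵥ (G m *ᵥ c m)))
      / (c m ⬝ᵥ (G m *ᵥ c m)), ?_⟩
    rintro y ⟨v', hv', rfl⟩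
    refine Finset.sum_le_sum fun m _ => ?_
    rw [hdotG m v']
    have hD : (G m *ᵥ c m) ⬝ᵥ ((infoMat d (g m) v' - infoMat d (g m) wnext) *ᵥ (G m *ᵥ c m))
        ≤ ∑ i, (g m (d i) ⬝ᵥ (G m *ᵥ c m)) * (g m (d i) ⬝ᵥ (G m *ᵥ c m)) := by
      rw [Matrix.sub_mulVec, dotProduct_sub, infoMat_dot]
      have h2 : 0 ≤ (G m *ᵥ c m) ⬝ᵥ (infoMat d (g m) wnext *ᵥ (G m *ᵥ c m)) :=
        infoMat_dot_nonneg _ _ hwnext.1 _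
      have h1 : ∑ i, v' i * ((g m (d i) ⬝ᵥ (G m *ᵥ c m)) * (g m (d i) ⬝ᵥ (G m *ᵥ c m)))
          ≤ ∑ i, (g m (d i) ⬝ᵥ (G m *ᵥ c m)) * (g m (d i) ⬝ᵥ (G m *ᵥ c m)) := by
        refine Finset.sum_le_sum fun i _ => ?_
        have hle1 : v' i ≤ 1 := by
          have := Finset.single_le_sum (f := v') (fun j _ => hv'.1 j) (Finset.mem_univ i)
          rwa [hv'.2] at this
        calc v' i * ((g m (d i) ⬝ᵥ (G m *ᵥ c m)) * (g m (d i) ⬝ᵥ (G m *ᵥ c m)))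
            ≤ 1 * ((g m (d i) ⬝ᵥ (G m *ᵥ c m)) * (g m (d i) ⬝ᵥ (G m *ᵥ c m))) :=
              mul_le_mul_of_nonneg_right hle1 (mul_self_nonneg _)
          _ = _ := one_mul _
      linarith
    have hVm := hpos m
    gcongr
    exact hα m
  -- the value at `v` is at most the supremum
  have hfv : ∑ m, α m *
      ((G m *ᵥ c m) ⬝ᵥ ((infoMat d (g m) v - infoMat d (g m) wnext) *ᵥ (G m *ᵥ c m)))
        / (c m ⬝ᵥ (G m *ᵥ c m))
      ≤ sSup ((fun v' => ∑ m, α m *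
        (c m ⬝ᵥ (G m *ᵥ ((infoMat d (g m) v' - infoMat d (g m) wnext) *ᵥ
          (G m *ᵥ c m)))) / (c m ⬝ᵥ (G m *ᵥ c m))) '' simplex k) := by
    have hmem := le_csSup hbdd (Set.mem_image_of_mem _ hv)
    simpa only [hdotG] using hmem
  -- the arithmetic mean bound
  have hU : ∑ m, α m * (((G m *ᵥ c m) ⬝ᵥ (infoMat d (g m)
      (fun i => γ * wold i + (1 - γ) * v i) *ᵥ (G m *ᵥ c m)))
        / (c m ⬝ᵥ (G m *ᵥ c m)))
      ≤ 1 + (1 - γ) * sSup ((fun v' => ∑ m, α m *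
        (c m ⬝ᵥ (G m *ᵥ ((infoMat d (g m) v' - infoMat d (g m) wnext) *ᵥ
          (G m *ᵥ c m)))) / (c m ⬝ᵥ (G m *ᵥ c m))) '' simplex k) := by
    have hsum : ∑ m, α m * (((G m *ᵥ c m) ⬝ᵥ (infoMat d (g m)
        (fun i => γ * wold i + (1 - γ) * v i) *ᵥ (G m *ᵥ c m)))
          / (c m ⬝ᵥ (G m *ᵥ c m)))
        = 1 + (1 - γ) * ∑ m, α m *
          ((G m *ᵥ c m) ⬝ᵥ ((infoMat d (g m) v - infoMat d (g m) wnext) *ᵥ (G m *ᵥ c m)))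
            / (c m ⬝ᵥ (G m *ᵥ c m)) := by
      have e : ∀ m, α m * (((G m *ᵥ c m) ⬝ᵥ (infoMat d (g m)
          (fun i => γ * wold i + (1 - γ) * v i) *ᵥ (G m *ᵥ c m)))
            / (c m ⬝ᵥ (G m *ᵥ c m)))
          = α m + (1 - γ) * (α m *
            ((G m *ᵥ c m) ⬝ᵥ ((infoMat d (g m) v - infoMat d (g m) wnext) *ᵥ (G m *ᵥ c m)))
              / (c m ⬝ᵥ (G m *ᵥ c m))) := by
        intro m
        rw [hNdecomp m]
        have hVm := (hpos m).ne'
        field_simp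
      rw [Finset.sum_congr rfl fun m _ => e m, Finset.sum_add_distrib, hαs, ← Finset.mul_sum]
    rw [hsum]
    have := mul_le_mul_of_nonneg_left hfv h1γ.le
    linarith
  -- conclude via the numerical lemma
  unfold Psi
  exact psi_bound α (fun m => c m ⬝ᵥ (G m *ᵥ c m))
    (fun m => (G m *ᵥ c m) ⬝ᵥ (infoMat d (g m)
      (fun i => γ * wold i + (1 - γ) * v i) *ᵥ (G m *ᵥ c m)))
    (fun m => c m ⬝ᵥ (G' m *ᵥ c m)) hα hαs hpos
    (fun m => infoMat_dot_nonneg _ _ hw'pos _) hV'nonneg hCS _ hU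
end

section
/- Let w = γ w_old + (1-γ) w_next be a feasible pooled design with c_m in the range of M_m(w) for all m, and let G_1,...,G_M be symmetric generalized inverses of M_1(w),...,M_M(w) with c_mᵀ G_m c_m > 0 and c_mᵀ G_m M_m(w_next) G_m c_m > 0 for all m. Then 1 + (1-γ) · max_{v ∈ S^k} Σ_{m=1}^M α_m c_mᵀ G_m (M_m(v) − M_m(w_next)) G_m c_m / (c_mᵀ G_m c_m) ≤ max_{d ∈ {d_1,...,d_k}} h(d, w); in particular the efficiency lower bound 1/k*(w,γ) obtained from the left-hand side is at least as sharp as the bound 1/h*(w) obtained from the right-hand side. -/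
open Matrix

/-- The function `h(d, w)` from the equivalence theorem, depending on
generalized inverses `G_m` of the information matrices at the pooled design. -/
noncomputable def hFun {k M : ℕ} {p : Fin M → ℕ} (d : Fin k → ℝ)
    (g : ∀ m, ℝ → Fin (p m) → ℝ) (c : ∀ m, Fin (p m) → ℝ) (α : Fin M → ℝ)
    (wnext : Fin k → ℝ)
    (G : ∀ m, Matrix (Fin (p m)) (Fin (p m)) ℝ) (x : ℝ) : ℝ :=
  (∑ m, α m * (g m x ⬝ᵥ (G m *ᵥ c m)) ^ 2 / (c m ⬝ᵥ (G m *ᵥ c m))) /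
    (∑ m, α m * (c m ⬝ᵥ ((G m)ᵀ *ᵥ (infoMat d (g m) wnext *ᵥ (G m *ᵥ c m)))) /
      (c m ⬝ᵥ (G m *ᵥ c m)))

lemma dot_infoMat {k pm : ℕ} (d : Fin k → ℝ) (g : ℝ → Fin pm → ℝ)
    (v : Fin k → ℝ) (x y : Fin pm → ℝ) :
    x ⬝ᵥ (infoMat d g v *ᵥ y) = ∑ i, v i * ((g (d i) ⬝ᵥ x) * (g (d i) ⬝ᵥ y)) := by
  simp only [infoMat, Matrix.mulVec, dotProduct, Matrix.sum_apply, Matrix.smul_apply,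
    vecMulVec_apply, smul_eq_mul, Finset.mul_sum, Finset.sum_mul]
  refine Eq.trans (Finset.sum_congr rfl fun j _ => Finset.sum_comm) ?_
  refine Eq.trans Finset.sum_comm ?_
  refine Finset.sum_congr rfl fun i _ => ?_
  refine Eq.trans Finset.sum_comm ?_
  refine Finset.sum_congr rfl fun l _ => ?_
  refine Finset.sum_congr rfl fun j _ => ?_
  ring

/-- The bound `1/k*(w, γ)` is at least as sharp as the bound `1/h*(w)`:
`1 + (1-γ) max_{v ∈ S^k} ∑ m, α_m c_mᵀ G_m (M_m(v) − M_m(w_next)) G_m c_m / (c_mᵀ G_m c_m)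
  ≤ max_{d ∈ {d_1,…,d_k}} h(d, w)`. -/
theorem kstar_le_hstar {k M : ℕ} (hk : 0 < k) {p : Fin M → ℕ}
    (d : Fin k → ℝ) (g : ∀ m, ℝ → Fin (p m) → ℝ) (c : ∀ m, Fin (p m) → ℝ)
    (α : Fin M → ℝ) (hα : ∀ m, 0 ≤ α m) (hαs : ∑ m, α m = 1)
    (wold wnext : Fin k → ℝ) (hwold : wold ∈ simplex k) (hwnext : wnext ∈ simplex k)
    (γ : ℝ) (hγ : γ ∈ Set.Ioo (0 : ℝ) 1)
    (w : Fin k → ℝ) (hw : w = fun i => γ * wold i + (1 - γ) * wnext i)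
    (hrange : ∀ m, ∃ x, infoMat d (g m) w *ᵥ x = c m)
    (G : ∀ m, Matrix (Fin (p m)) (Fin (p m)) ℝ)
    (hGsym : ∀ m, (G m)ᵀ = G m)
    (hGinv : ∀ m, infoMat d (g m) w * G m * infoMat d (g m) w = infoMat d (g m) w)
    (hpos : ∀ m, 0 < c m ⬝ᵥ (G m *ᵥ c m))
    (hpos' : ∀ m,
      0 < c m ⬝ᵥ (G m *ᵥ (infoMat d (g m) wnext *ᵥ (G m *ᵥ c m)))) :
    1 + (1 - γ) * sSup ((fun v => ∑ m, α m *
        (c m ⬝ᵥ (G m *ᵥ ((infoMat d (g m) v - infoMat d (g m) wnext) *ᵥ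
          (G m *ᵥ c m)))) / (c m ⬝ᵥ (G m *ᵥ c m))) '' simplex k) ≤
      Finset.univ.sup' (Finset.univ_nonempty_iff.mpr ⟨⟨0, hk⟩⟩)
        (fun i => hFun d g c α wnext G (d i)) := by

  obtain ⟨hγ0, hγ1⟩ := hγ
  have hγ1' : (0:ℝ) < 1 - γ := by linarith
  set hne : (Finset.univ : Finset (Fin k)).Nonempty :=
    Finset.univ_nonempty_iff.mpr ⟨⟨0, hk⟩⟩ with hhne
  -- abbreviations
  set q : ∀ m : Fin M, Fin k → ℝ := fun m i => (g m (d i) ⬝ᵥ (G m *ᵥ c m)) ^ 2 with hq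
  set κ : Fin M → ℝ := fun m => c m ⬝ᵥ (G m *ᵥ c m) with hκ
  have hq0 : ∀ m i, 0 ≤ q m i := fun m i => sq_nonneg _
  -- key algebraic identity
  have keyA : ∀ (m : Fin M) (v : Fin k → ℝ),
      c m ⬝ᵥ (G m *ᵥ (infoMat d (g m) v *ᵥ (G m *ᵥ c m))) = ∑ i, v i * q m i := by
    intro m v
    have h1 : c m ⬝ᵥ (G m *ᵥ (infoMat d (g m) v *ᵥ (G m *ᵥ c m)))
        = (G m *ᵥ c m) ⬝ᵥ (infoMat d (g m) v *ᵥ (G m *ᵥ c m)) := by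
      have h2 : c m ᵥ* G m = G m *ᵥ c m := by
        conv_lhs => rw [← hGsym m]
        exact Matrix.vecMul_transpose _ _
      rw [Matrix.dotProduct_mulVec, h2]
    rw [h1, dot_infoMat]
    exact Finset.sum_congr rfl fun i _ => by rw [hq]; ring
  -- κ m = b ⬝ M(w) b
  have keyw : ∀ m : Fin M,
      c m ⬝ᵥ (G m *ᵥ (infoMat d (g m) w *ᵥ (G m *ᵥ c m))) = κ m := by
    intro m
    obtain ⟨x, hx⟩ := hrange m
    have hvec : G m *ᵥ (infoMat d (g m) w *ᵥ (G m *ᵥ c m)) = G m *ᵥ c m := by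
      conv_lhs => rw [← hx]
      rw [Matrix.mulVec_mulVec, Matrix.mulVec_mulVec, Matrix.mulVec_mulVec,
        mul_assoc, mul_assoc, ← mul_assoc (infoMat d (g m) w), hGinv m,
        ← Matrix.mulVec_mulVec, hx]
    rw [hvec]
  have hκpos : ∀ m, 0 < κ m := hpos
  -- N, T, D, S
  set N : Fin k → ℝ := fun i => ∑ m, α m * q m i / κ m with hN
  set T : ℝ := Finset.univ.sup' hne N with hT
  set D : ℝ := ∑ m, α m * (∑ i, wnext i * q m i) / κ m with hD
  set S : ℝ := ∑ m, α m * (∑ i, wold i * q m i) / κ m with hS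
  have hN0 : ∀ i, 0 ≤ N i := by
    intro i
    refine Finset.sum_nonneg fun m _ => ?_
    exact div_nonneg (mul_nonneg (hα m) (hq0 m i)) (hκpos m).le
  have hNle : ∀ i, N i ≤ T := fun i => Finset.le_sup' N (Finset.mem_univ i)
  -- swap sums
  have swap : ∀ v : Fin k → ℝ,
      ∑ m, α m * (∑ i, v i * q m i) / κ m = ∑ i, v i * N i := by
    intro v
    have : ∀ m : Fin M, α m * (∑ i, v i * q m i) / κ m
        = ∑ i, v i * (α m * q m i / κ m) := by
      intro m
      rw [Finset.mul_sum, Finset.sum_div]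
      exact Finset.sum_congr rfl fun i _ => by ring
    rw [Finset.sum_congr rfl fun m _ => this m, Finset.sum_comm]
    exact Finset.sum_congr rfl fun i _ => by rw [Finset.mul_sum]
  have hsum_le_T : ∀ v : Fin k → ℝ, v ∈ simplex k → ∑ i, v i * N i ≤ T := by
    intro v hv
    calc ∑ i, v i * N i ≤ ∑ i, v i * T := by
          refine Finset.sum_le_sum fun i _ => ?_
          exact mul_le_mul_of_nonneg_left (hNle i) (hv.1 i)
      _ = T := by rw [← Finset.sum_mul, hv.2, one_mul]
  -- D positive, D ≤ T, S nonneg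
  have hDeq : D = ∑ i, wnext i * N i := swap wnext
  have hSeq : S = ∑ i, wold i * N i := swap wold
  have hDT : D ≤ T := by rw [hDeq]; exact hsum_le_T wnext hwnext
  have hS0 : 0 ≤ S := by
    rw [hSeq]
    exact Finset.sum_nonneg fun i _ => mul_nonneg (hwold.1 i) (hN0 i)
  have hDpos : 0 < D := by
    obtain ⟨m0, hm0⟩ : ∃ m, 0 < α m := by
      by_contra h
      push_neg at h
      have : ∑ m, α m = 0 :=
        le_antisymm (Finset.sum_nonpos fun m _ => h m) (Finset.sum_nonneg fun m _ => hα m)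
      rw [hαs] at this; norm_num at this
    refine Finset.sum_pos' (fun m _ => ?_) ⟨m0, Finset.mem_univ m0, ?_⟩
    · refine div_nonneg (mul_nonneg (hα m) ?_) (hκpos m).le
      exact Finset.sum_nonneg fun i _ => mul_nonneg (hwnext.1 i) (hq0 m i)
    · have := hpos' m0
      rw [keyA m0 wnext] at this
      exact div_pos (mul_pos hm0 this) (hκpos m0)
  -- the pooled identity: γ S + (1-γ) D = 1
  have hpool : γ * S + (1 - γ) * D = 1 := by
    have h1 : ∀ m : Fin M, ∑ i, w i * q m i = κ m := by
      intro m; rw [← keyA m w, keyw m]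
    have h2 : ∀ m : Fin M, ∑ i, w i * q m i
        = γ * (∑ i, wold i * q m i) + (1 - γ) * (∑ i, wnext i * q m i) := by
      intro m
      rw [hw, Finset.mul_sum, Finset.mul_sum, ← Finset.sum_add_distrib]
      exact Finset.sum_congr rfl fun i _ => by ring
    have h3 : ∑ m, α m * (γ * (∑ i, wold i * q m i)
        + (1 - γ) * (∑ i, wnext i * q m i)) / κ m = 1 := by
      rw [← hαs]
      refine Finset.sum_congr rfl fun m _ => ?_
      rw [hαs, ← h2 m, h1 m, mul_div_assoc, div_self (hκpos m).ne', mul_one]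
    calc γ * S + (1 - γ) * D
        = ∑ m, α m * (γ * (∑ i, wold i * q m i)
            + (1 - γ) * (∑ i, wnext i * q m i)) / κ m := by
          rw [hS, hD, Finset.mul_sum, Finset.mul_sum, ← Finset.sum_add_distrib]
          exact Finset.sum_congr rfl fun m _ => by ring
      _ = 1 := h3
  -- bound the sSup
  have hsup : sSup ((fun v => ∑ m, α m *
      (c m ⬝ᵥ (G m *ᵥ ((infoMat d (g m) v - infoMat d (g m) wnext) *ᵥ
        (G m *ᵥ c m)))) / (c m ⬝ᵥ (G m *ᵥ c m))) '' simplex k) ≤ T - D := by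
    have hval : ∀ v : Fin k → ℝ, ∑ m, α m *
        (c m ⬝ᵥ (G m *ᵥ ((infoMat d (g m) v - infoMat d (g m) wnext) *ᵥ
          (G m *ᵥ c m)))) / (c m ⬝ᵥ (G m *ᵥ c m))
        = (∑ i, v i * N i) - D := by
      intro v
      have : ∀ m : Fin M, α m *
          (c m ⬝ᵥ (G m *ᵥ ((infoMat d (g m) v - infoMat d (g m) wnext) *ᵥ
            (G m *ᵥ c m)))) / κ m
          = α m * (∑ i, v i * q m i) / κ m - α m * (∑ i, wnext i * q m i) / κ m := by
        intro m
        rw [Matrix.sub_mulVec, Matrix.mulVec_sub, dotProduct_sub,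
          keyA m v, keyA m wnext]
        ring
      rw [Finset.sum_congr rfl fun m _ => this m, Finset.sum_sub_distrib,
        swap v, ← hD]
    refine csSup_le ?_ ?_
    · refine Set.Nonempty.image _ ⟨fun _ => (k:ℝ)⁻¹, fun i => by positivity, ?_⟩
      simp [Finset.sum_const, Finset.card_univ]
      field_simp
    · rintro x ⟨v, hv, rfl⟩
      simp only [hval v]
      have := hsum_le_T v hv
      linarith
  -- the RHS equals T / D at the maximizer
  obtain ⟨i0, _, hi0⟩ := Finset.exists_mem_eq_sup' hne N
  have hRHS : T / D ≤ Finset.univ.sup' hne (fun i => hFun d g c α wnext G (d i)) := by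
    have heq : hFun d g c α wnext G (d i0) = N i0 / D := by
      simp only [hFun]
      congr 1
      refine Finset.sum_congr rfl fun m _ => ?_
      rw [hGsym m, keyA m wnext]
    calc T / D = N i0 / D := by rw [hT, hi0]
      _ = hFun d g c α wnext G (d i0) := heq.symm
      _ ≤ _ := Finset.le_sup' (fun i => hFun d g c α wnext G (d i)) (Finset.mem_univ i0)
  -- conclude
  refine le_trans ?_ hRHS
  have h1 : 1 + (1 - γ) * sSup ((fun v => ∑ m, α m *
      (c m ⬝ᵥ (G m *ᵥ ((infoMat d (g m) v - infoMat d (g m) wnext) *ᵥ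
        (G m *ᵥ c m)))) / (c m ⬝ᵥ (G m *ᵥ c m))) '' simplex k)
      ≤ 1 + (1 - γ) * (T - D) := by nlinarith [hsup]
  refine le_trans h1 ?_
  rw [le_div_iff₀ hDpos]
  nlinarith [mul_nonneg (sub_nonneg.2 hDT) (by nlinarith : (0:ℝ) ≤ 1 - (1 - γ) * D)]
end
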